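/- If f : ℝ → ℝ is continuous, 2π-periodic, and its Fourier series converges uniformly, then the Fourier series converges to f. -/

import Mathlib

/-!
The partial sums `S N` are continuous and `2π`-periodic, hence so is their uniform limit `g`.
Uniform convergence lets the limit pass under the integral sign, and by orthogonality of the
trigonometric system `∫₀^{2π} S N x · cos (m x) dx = π aₘ` as soon as `N ≥ m` (likewise for
the sines), so `g` has the same Fourier coefficients as `f`. All complex Fourier coefficients
of the continuous periodic function `f - g` therefore vanish; by Parseval its `L²` norm on
`[0, 2π]` is zero, so it vanishes identically.
-/

open intervalIntegral Real Filter Finset Topology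

theorem Function.Periodic.of_tendsto {α β ι : Type*} [Add α] [TopologicalSpace β] [T2Space β]
    {l : Filter ι} [l.NeBot] {F : ι → α → β} {g : α → β} {c : α}
    (hF : ∀ i, Function.Periodic (F i) c) (hFg : ∀ x, Tendsto (F · x) l (𝓝 (g x))) :
    Function.Periodic g c := fun x =>
  tendsto_nhds_unique ((hFg (x + c)).congr fun i => hF i x) (hFg x)

theorem TendstoUniformly.tendsto_intervalIntegral_mul {ι : Type*} {l : Filter ι}
    [l.IsCountablyGenerated] [l.NeBot] {F : ι → ℝ → ℝ} {g w : ℝ → ℝ} {a b : ℝ}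
    (hFg : TendstoUniformly F g l) (hF : ∀ i, Continuous (F i)) (hw : Continuous w) :
    Tendsto (fun i => ∫ x in a..b, F i x * w x) l (𝓝 (∫ x in a..b, g x * w x)) := by
  have hg : Continuous g := hFg.continuous (Frequently.of_forall hF)
  refine tendsto_integral_filter_of_dominated_convergence (fun x => (|g x| + 1) * |w x|)
    (.of_forall fun i => ((hF i).mul hw).aestronglyMeasurable) ?_
    (((hg.abs.add continuous_const).mul hw.abs).intervalIntegrable _ _)
    (.of_forall fun x _ => (hFg.tendsto_at x).mul_const _)
  filter_upwards [Metric.tendstoUniformly_iff.mp hFg 1 one_pos] with i hi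
  refine .of_forall fun x _ => ?_
  rw [norm_mul, norm_eq_abs, norm_eq_abs]
  gcongr
  have := hi x
  rw [dist_eq] at this
  linarith [abs_sub_abs_le_abs_sub (F i x) (g x), abs_sub_comm (g x) (F i x)]

theorem integral_cos_int_mul_eq_zero {k : ℤ} (hk : k ≠ 0) :
    ∫ x in (0:ℝ)..2 * π, cos (k * x) = 0 := by
  rw [integral_comp_mul_left cos (Int.cast_ne_zero.mpr hk), integral_cos, mul_zero, sin_zero,
    show (k : ℝ) * (2 * π) = (2 * k : ℤ) * π by push_cast; ring, sin_int_mul_pi, sub_zero,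
    smul_zero]

theorem integral_sin_int_mul_eq_zero (k : ℤ) : ∫ x in (0:ℝ)..2 * π, sin (k * x) = 0 := by
  rcases eq_or_ne k 0 with rfl | hk
  · simp
  rw [integral_comp_mul_left sin (Int.cast_ne_zero.mpr hk), integral_sin, mul_zero, cos_zero,
    cos_int_mul_two_pi, sub_self, smul_zero]

theorem integral_cos_nat_mul_mul_cos_nat_mul (n m : ℕ) :
    ∫ x in (0:ℝ)..2 * π, cos (n * x) * cos (m * x) =
      (∫ x in (0:ℝ)..2 * π, cos (((n - m : ℤ) : ℝ) * x)) / 2 +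
        (∫ x in (0:ℝ)..2 * π, cos (((n + m : ℤ) : ℝ) * x)) / 2 := by
  rw [← integral_div, ← integral_div,
    ← integral_add ((by fun_prop : Continuous _).intervalIntegrable _ _)
      ((by fun_prop : Continuous _).intervalIntegrable _ _)]
  refine integral_congr fun x _ => ?_
  simp only [Int.cast_sub, Int.cast_add, Int.cast_natCast, sub_mul, add_mul, cos_sub, cos_add]
  ring

theorem integral_sin_nat_mul_mul_sin_nat_mul (n m : ℕ) :
    ∫ x in (0:ℝ)..2 * π, sin (n * x) * sin (m * x) =
      (∫ x in (0:ℝ)..2 * π, cos (((n - m : ℤ) : ℝ) * x)) / 2 -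
        (∫ x in (0:ℝ)..2 * π, cos (((n + m : ℤ) : ℝ) * x)) / 2 := by
  rw [← integral_div, ← integral_div,
    ← integral_sub ((by fun_prop : Continuous _).intervalIntegrable _ _)
      ((by fun_prop : Continuous _).intervalIntegrable _ _)]
  refine integral_congr fun x _ => ?_
  simp only [Int.cast_sub, Int.cast_add, Int.cast_natCast, sub_mul, add_mul, cos_sub, cos_add]
  ring

theorem integral_sin_nat_mul_mul_cos_nat_mul (n m : ℕ) :
    ∫ x in (0:ℝ)..2 * π, sin (n * x) * cos (m * x) = 0 := by
  have h : ∫ x in (0:ℝ)..2 * π, sin (n * x) * cos (m * x) =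
      (∫ x in (0:ℝ)..2 * π, sin (((n + m : ℤ) : ℝ) * x)) / 2 +
        (∫ x in (0:ℝ)..2 * π, sin (((n - m : ℤ) : ℝ) * x)) / 2 := by
    rw [← integral_div, ← integral_div,
    ← integral_add ((by fun_prop : Continuous _).intervalIntegrable _ _)
      ((by fun_prop : Continuous _).intervalIntegrable _ _)]
    refine integral_congr fun x _ => ?_
    simp only [Int.cast_sub, Int.cast_add, Int.cast_natCast, sub_mul, add_mul, sin_sub, sin_add]
    ring
  rw [h, integral_sin_int_mul_eq_zero, integral_sin_int_mul_eq_zero, zero_div, add_zero]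

theorem integral_cos_nat_mul_mul_sin_nat_mul (n m : ℕ) :
    ∫ x in (0:ℝ)..2 * π, cos (n * x) * sin (m * x) = 0 := by
  simpa only [mul_comm] using integral_sin_nat_mul_mul_cos_nat_mul m n

theorem integral_cos_nat_mul_mul_cos_nat_mul_of_ne {n m : ℕ} (h : n ≠ m) :
    ∫ x in (0:ℝ)..2 * π, cos (n * x) * cos (m * x) = 0 := by
  rw [integral_cos_nat_mul_mul_cos_nat_mul, integral_cos_int_mul_eq_zero (by omega),
    integral_cos_int_mul_eq_zero (by omega), zero_div, add_zero]

theorem integral_sin_nat_mul_mul_sin_nat_mul_of_ne {n m : ℕ} (h : n ≠ m) :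
    ∫ x in (0:ℝ)..2 * π, sin (n * x) * sin (m * x) = 0 := by
  rw [integral_sin_nat_mul_mul_sin_nat_mul, integral_cos_int_mul_eq_zero (by omega),
    integral_cos_int_mul_eq_zero (by omega), zero_div, sub_zero]

theorem integral_cos_nat_mul_mul_self {n : ℕ} (hn : n ≠ 0) :
    ∫ x in (0:ℝ)..2 * π, cos (n * x) * cos (n * x) = π := by
  rw [integral_cos_nat_mul_mul_cos_nat_mul, integral_cos_int_mul_eq_zero (k := n + n) (by omega)]
  simp

theorem integral_sin_nat_mul_mul_self {n : ℕ} (hn : n ≠ 0) :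
    ∫ x in (0:ℝ)..2 * π, sin (n * x) * sin (n * x) = π := by
  rw [integral_sin_nat_mul_mul_sin_nat_mul, integral_cos_int_mul_eq_zero (k := n + n) (by omega)]
  simp

noncomputable def trigPartialSum (a b : ℕ → ℝ) (N : ℕ) (x : ℝ) : ℝ :=
  a 0 / 2 + ∑ n ∈ Icc 1 N, (a n * cos (n * x) + b n * sin (n * x))

section trigPartialSum

variable (a b : ℕ → ℝ) (N : ℕ)

theorem continuous_trigPartialSum : Continuous (trigPartialSum a b N) := by
  unfold trigPartialSum
  fun_prop

theorem periodic_trigPartialSum : Function.Periodic (trigPartialSum a b N) (2 * π) := by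
  intro x
  simp only [trigPartialSum, mul_add, cos_add_nat_mul_two_pi, sin_add_nat_mul_two_pi]

theorem integral_trigPartialSum_mul {u : ℝ → ℝ} (hu : Continuous u) :
    ∫ x in (0:ℝ)..2 * π, trigPartialSum a b N x * u x =
      a 0 / 2 * (∫ x in (0:ℝ)..2 * π, u x) +
        ∑ n ∈ Icc 1 N, (a n * (∫ x in (0:ℝ)..2 * π, cos (n * x) * u x) +
          b n * ∫ x in (0:ℝ)..2 * π, sin (n * x) * u x) := by
  have integrable : ∀ {v : ℝ → ℝ}, Continuous v →
      IntervalIntegrable v MeasureTheory.volume 0 (2 * π) :=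
    fun hv => hv.intervalIntegrable _ _
  simp only [trigPartialSum, add_mul, sum_mul]
  rw [integral_add (integrable (by fun_prop)) (integrable (by fun_prop)), integral_const_mul,
    integral_finsetSum fun n _ => integrable (by fun_prop)]
  congr 1
  refine sum_congr rfl fun n _ => ?_
  rw [integral_add (integrable (by fun_prop)) (integrable (by fun_prop)), ← integral_const_mul,
    ← integral_const_mul]
  simp only [mul_assoc]

theorem integral_trigPartialSum_mul_cos {m : ℕ} (hm : m ≤ N) :
    ∫ x in (0:ℝ)..2 * π, trigPartialSum a b N x * cos (m * x) = π * a m := by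
  rw [integral_trigPartialSum_mul a b N (by fun_prop)]
  rcases eq_or_ne m 0 with rfl | hm0
  · rw [sum_eq_zero fun n hn => by
      rw [integral_cos_nat_mul_mul_cos_nat_mul_of_ne (by rw [mem_Icc] at hn; omega),
        integral_sin_nat_mul_mul_cos_nat_mul, mul_zero, mul_zero, add_zero]]
    simp only [CharP.cast_eq_zero, zero_mul, cos_zero, integral_const, sub_zero, smul_eq_mul,
      mul_one, add_zero]
    ring
  · have hcos : ∫ x in (0:ℝ)..2 * π, cos (m * x) = 0 := by
      exact_mod_cast integral_cos_int_mul_eq_zero (k := m) (by omega)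
    rw [sum_eq_single_of_mem m (mem_Icc.mpr ⟨by omega, hm⟩) fun n _ hnm => by
      rw [integral_cos_nat_mul_mul_cos_nat_mul_of_ne hnm, integral_sin_nat_mul_mul_cos_nat_mul,
        mul_zero, mul_zero, add_zero],
      integral_cos_nat_mul_mul_self hm0, integral_sin_nat_mul_mul_cos_nat_mul, hcos]
    ring

theorem integral_trigPartialSum_mul_sin {m : ℕ} (hm0 : m ≠ 0) (hm : m ≤ N) :
    ∫ x in (0:ℝ)..2 * π, trigPartialSum a b N x * sin (m * x) = π * b m := by
  have hsin : ∫ x in (0:ℝ)..2 * π, sin (m * x) = 0 := by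
    exact_mod_cast integral_sin_int_mul_eq_zero m
  rw [integral_trigPartialSum_mul a b N (by fun_prop),
    sum_eq_single_of_mem m (mem_Icc.mpr ⟨by omega, hm⟩) fun n _ hnm => by
      rw [integral_cos_nat_mul_mul_sin_nat_mul, integral_sin_nat_mul_mul_sin_nat_mul_of_ne hnm,
        mul_zero, mul_zero, add_zero],
    integral_sin_nat_mul_mul_self hm0, integral_cos_nat_mul_mul_sin_nat_mul, hsin]
  ring

variable {a b} {g : ℝ → ℝ}

theorem integral_mul_cos_eq_of_tendstoUniformly_trigPartialSum
    (hg : TendstoUniformly (trigPartialSum a b) g atTop) (m : ℕ) :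
    ∫ x in (0:ℝ)..2 * π, g x * cos (m * x) = π * a m :=
  tendsto_nhds_unique
    (hg.tendsto_intervalIntegral_mul (continuous_trigPartialSum a b) (by fun_prop))
    (tendsto_const_nhds.congr' <| (eventually_ge_atTop m).mono fun N hN =>
      (integral_trigPartialSum_mul_cos a b N hN).symm)

theorem integral_mul_sin_eq_of_tendstoUniformly_trigPartialSum
    (hg : TendstoUniformly (trigPartialSum a b) g atTop) {m : ℕ} (hm : m ≠ 0) :
    ∫ x in (0:ℝ)..2 * π, g x * sin (m * x) = π * b m :=
  tendsto_nhds_unique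
    (hg.tendsto_intervalIntegral_mul (continuous_trigPartialSum a b) (by fun_prop))
    (tendsto_const_nhds.congr' <| (eventually_ge_atTop m).mono fun N hN =>
      (integral_trigPartialSum_mul_sin a b N hm hN).symm)

end trigPartialSum

theorem fourierCoeffOn_two_pi_ofReal {h : ℝ → ℝ} (hc : Continuous h) (k : ℤ) :
    fourierCoeffOn two_pi_pos (fun x => (h x : ℂ)) k =
      (2 * π : ℂ)⁻¹ * ((∫ x in (0:ℝ)..2 * π, h x * cos (k * x) : ℝ) -
        (∫ x in (0:ℝ)..2 * π, h x * sin (k * x) : ℝ) * Complex.I) := by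
  have hterm : ∀ x : ℝ, fourier (-k) (x : AddCircle (2 * π - 0)) • (h x : ℂ) =
      ((h x * cos (k * x) : ℝ) : ℂ) - ((h x * sin (k * x) : ℝ) : ℂ) * Complex.I := by
    intro x
    have harg : 2 * π * Complex.I * ((-k : ℤ) : ℂ) * x / ((2 * π - 0 : ℝ) : ℂ) =
        ((-(k * x) : ℝ) : ℂ) * Complex.I := by
      have hπ : (π : ℂ) ≠ 0 := Complex.ofReal_ne_zero.mpr pi_ne_zero
      field_simp
      push_cast
      ring
    rw [fourier_coe_apply, harg, Complex.exp_mul_I, ← Complex.ofReal_cos, ← Complex.ofReal_sin,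
      cos_neg, sin_neg, smul_eq_mul]
    push_cast
    ring
  rw [fourierCoeffOn_eq_integral, integral_congr fun x _ => hterm x,
    integral_sub ((by fun_prop : Continuous _).intervalIntegrable _ _)
      ((by fun_prop : Continuous _).intervalIntegrable _ _),
    integral_mul_const, integral_ofReal, integral_ofReal, sub_zero, Complex.real_smul]
  push_cast
  ring

theorem integral_sq_eq_zero_of_integral_mul_cos_sin_eq_zero {h : ℝ → ℝ} (hc : Continuous h)
    (hcos : ∀ n : ℕ, ∫ x in (0:ℝ)..2 * π, h x * cos (n * x) = 0)
    (hsin : ∀ n : ℕ, ∫ x in (0:ℝ)..2 * π, h x * sin (n * x) = 0) :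
    ∫ x in (0:ℝ)..2 * π, h x ^ 2 = 0 := by
  have hcoeff : ∀ k : ℤ, fourierCoeffOn two_pi_pos (fun x => (h x : ℂ)) k = 0 := by
    intro k
    obtain ⟨n, rfl | rfl⟩ := Int.eq_nat_or_neg k
    · simp [fourierCoeffOn_two_pi_ofReal hc, hcos, hsin]
    · simp [fourierCoeffOn_two_pi_ofReal hc, hcos, hsin]
  have hL2 : MeasureTheory.MemLp (fun x => (h x : ℂ)) 2
      (MeasureTheory.volume.restrict (Set.Ioc 0 (2 * π))) :=
    (MeasureTheory.memLp_two_iff_integrable_sq_norm (by fun_prop)).mpr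
      (by fun_prop : Continuous fun x => ‖(h x : ℂ)‖ ^ 2).integrableOn_Ioc
  have hparseval := hasSum_sq_fourierCoeffOn two_pi_pos hL2
  simp only [hcoeff, norm_zero, ne_eq, OfNat.ofNat_ne_zero, not_false_eq_true, zero_pow]
    at hparseval
  simpa using hparseval.unique hasSum_zero

theorem Function.Periodic.eq_zero_of_integral_mul_cos_sin_eq_zero {h : ℝ → ℝ}
    (hp : Function.Periodic h (2 * π)) (hc : Continuous h)
    (hcos : ∀ n : ℕ, ∫ x in (0:ℝ)..2 * π, h x * cos (n * x) = 0)
    (hsin : ∀ n : ℕ, ∫ x in (0:ℝ)..2 * π, h x * sin (n * x) = 0) :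
    h = 0 := by
  have hsq := integral_sq_eq_zero_of_integral_mul_cos_sin_eq_zero hc hcos hsin
  have hIcc : ∀ x ∈ Set.Icc 0 (2 * π), h x = 0 := by
    intro x hx
    by_contra hne
    have := integral_pos two_pi_pos (by fun_prop : Continuous fun x => h x ^ 2).continuousOn
      (fun _ _ => sq_nonneg _) ⟨x, hx, sq_pos_of_ne_zero hne⟩
    linarith
  funext x
  obtain ⟨y, hy, hxy⟩ := hp.exists_mem_Ico₀ two_pi_pos x
  rw [hxy, hIcc y (Set.Ico_subset_Icc_self hy), Pi.zero_apply]

theorem Function.Periodic.eq_of_integral_mul_cos_sin_eq {f g : ℝ → ℝ}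
    (hfp : Function.Periodic f (2 * π)) (hgp : Function.Periodic g (2 * π))
    (hf : Continuous f) (hg : Continuous g)
    (hcos : ∀ n : ℕ,
      ∫ x in (0:ℝ)..2 * π, f x * cos (n * x) = ∫ x in (0:ℝ)..2 * π, g x * cos (n * x))
    (hsin : ∀ n : ℕ,
      ∫ x in (0:ℝ)..2 * π, f x * sin (n * x) = ∫ x in (0:ℝ)..2 * π, g x * sin (n * x)) :
    f = g := by
  refine sub_eq_zero.mp ((hfp.sub hgp).eq_zero_of_integral_mul_cos_sin_eq_zero (hf.sub hg)
    (fun n => ?_) (fun n => ?_))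
  all_goals
    simp only [Pi.sub_apply, sub_mul]
    rw [integral_sub ((by fun_prop : Continuous _).intervalIntegrable _ _)
      ((by fun_prop : Continuous _).intervalIntegrable _ _), sub_eq_zero]
  exacts [hcos n, hsin n]

/-- If `f` is continuous and `2π`-periodic and its Fourier series converges
uniformly (to some function `g`), then the Fourier series converges to `f`. -/
theorem fourier_uniform_limit_eq (f : ℝ → ℝ) (hf : Continuous f)
    (hper : Function.Periodic f (2 * π))
    (a : ℕ → ℝ) (b : ℕ → ℝ)
    (ha : ∀ n : ℕ, a n = (1 / π) * ∫ x in (0:ℝ)..(2 * π), f x * Real.cos (n * x))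
    (hb : ∀ n : ℕ, b n = (1 / π) * ∫ x in (0:ℝ)..(2 * π), f x * Real.sin (n * x))
    (S : ℕ → ℝ → ℝ)
    (hS : ∀ (N : ℕ) (x : ℝ), S N x =
      a 0 / 2 + ∑ n ∈ Finset.Icc 1 N, (a n * Real.cos (n * x) + b n * Real.sin (n * x)))
    (g : ℝ → ℝ) (hunif : TendstoUniformly S g Filter.atTop) :
    g = f := by
  obtain rfl : S = trigPartialSum a b := funext fun N => funext (hS N)
  have hg : Continuous g :=
    hunif.continuous (Frequently.of_forall (continuous_trigPartialSum a b))
  have hgp : Function.Periodic g (2 * π) :=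
    .of_tendsto (periodic_trigPartialSum a b) hunif.tendsto_at
  refine hgp.eq_of_integral_mul_cos_sin_eq hper hg hf (fun n => ?_) (fun n => ?_)
  · rw [integral_mul_cos_eq_of_tendstoUniformly_trigPartialSum hunif, ha]
    field_simp
  · rcases eq_or_ne n 0 with rfl | hn
    · simp
    · rw [integral_mul_sin_eq_of_tendstoUniformly_trigPartialSum hunif hn, hb]
      field_simp
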